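/- For all positive integers n and m: ∑_{k=1}^n 1/k^m = ∑_{n ≥ k_1 ≥ ⋯ ≥ k_m ≥ 1} (-1)^{k_1+1} C(n,k_1) ∏_{j=1}^m 1/k_j. -/

import Mathlib

/-!
Write `B f n = ∑_{k=1}^n (-1)^{k+1} C(n,k) f k`. The partial alternating sums of a row of
Pascal's triangle are `∑_{k=j+1}^{n+1} (-1)^{k+1} C(n+1,k) = (-1)^j C(n,j)`, so exchanging the
order of summation gives `B (k ↦ ∑_{j≤k} f j / j) n = B f n / n`; since `nestedInv · (m+1)` is
exactly such a partial sum of `nestedInv · m`, induction on the depth gives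
`B (nestedInv · m) n = 1 / n^m`. On the other hand Pascal's rule gives
`B (f / ·) n - B (f / ·) (n-1) = B f n / n`, and telescoping this with `f = nestedInv · (m-1)`
turns the right-hand side into `∑_{j≤n} 1 / j^m`.
-/

/-- `∑_{n ≥ k₁ ≥ ⋯ ≥ k_m ≥ 1} ∏_j 1/k_j`. -/
noncomputable def nestedInv : ℕ → ℕ → ℝ
  | _, 0 => 1
  | n, m + 1 => ∑ k ∈ Finset.Icc 1 n, (1 / (k : ℝ)) * nestedInv k m

open Finset

theorem sum_Icc_neg_one_pow_mul_choose {R : Type*} [CommRing R] {n j : ℕ} (h : j ≤ n) :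
    ∑ k ∈ Icc (j + 1) (n + 1), (-1 : R) ^ (k + 1) * ((n + 1).choose k : R)
      = (-1) ^ j * (n.choose j : R) := by
  have hsplit := sum_range_add_sum_Ico (fun k => (-1 : ℤ) ^ k * ((n + 1).choose k : ℤ))
    (show j + 1 ≤ n + 1 + 1 by omega)
  rw [Int.alternating_sum_range_choose_eq_choose,
    Int.alternating_sum_range_choose_of_ne n.succ_ne_zero, Ico_add_one_right_eq_Icc] at hsplit
  have hZ : ∑ k ∈ Icc (j + 1) (n + 1), (-1 : ℤ) ^ (k + 1) * ((n + 1).choose k : ℤ)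
      = (-1) ^ j * (n.choose j : ℤ) := by
    simp only [pow_succ, mul_neg_one, neg_mul, sum_neg_distrib]
    linear_combination -hsplit
  exact_mod_cast congrArg (Int.cast : ℤ → R) hZ

theorem cast_choose_div_succ {K : Type*} [Field K] [CharZero K] (n j : ℕ) :
    (n.choose j : K) / (j + 1) = ((n + 1).choose (j + 1) : K) / (n + 1) := by
  rw [div_eq_div_iff (Nat.cast_add_one_ne_zero j) (Nat.cast_add_one_ne_zero n)]
  norm_cast
  linarith [Nat.add_one_mul_choose_eq n j]

def alternatingChooseSum {R : Type*} [CommRing R] (f : ℕ → R) (n : ℕ) : R :=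
  ∑ k ∈ Icc 1 n, (-1 : R) ^ (k + 1) * (n.choose k : R) * f k

theorem alternatingChooseSum_one {R : Type*} [CommRing R] (n : ℕ) :
    alternatingChooseSum (fun _ => (1 : R)) (n + 1) = 1 := by
  simpa [alternatingChooseSum] using sum_Icc_neg_one_pow_mul_choose (R := R) (Nat.zero_le n)

section Field

variable {K : Type*} [Field K] [CharZero K]

theorem alternatingChooseSum_sum_Icc (f : ℕ → K) (n : ℕ) :
    alternatingChooseSum (fun k => ∑ j ∈ Icc 1 k, 1 / (j : K) * f j) (n + 1)
      = 1 / (n + 1 : K) * alternatingChooseSum f (n + 1) := by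
  unfold alternatingChooseSum
  simp_rw [mul_sum]
  rw [sum_comm' (s' := fun j => Icc j (n + 1)) (t' := Icc 1 (n + 1))
    (fun k j => by simp only [mem_Icc]; omega)]
  refine sum_congr rfl fun j hj => ?_
  obtain ⟨hj1, hjn⟩ := mem_Icc.mp hj
  obtain ⟨i, rfl⟩ := Nat.exists_eq_add_one.mpr hj1
  rw [← sum_mul, sum_Icc_neg_one_pow_mul_choose (by omega)]
  push_cast
  linear_combination (-1 : K) ^ i * f (i + 1) * cast_choose_div_succ (K := K) n i

theorem alternatingChooseSum_div_succ (f : ℕ → K) (n : ℕ) :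
    alternatingChooseSum (fun k => 1 / (k : K) * f k) (n + 1)
      = alternatingChooseSum (fun k => 1 / (k : K) * f k) n
        + 1 / (n + 1 : K) * alternatingChooseSum f (n + 1) := by
  have hextend : ∑ k ∈ Icc 1 (n + 1), (-1 : K) ^ (k + 1) * (n.choose k : K) * (1 / (k : K) * f k)
      = alternatingChooseSum (fun k => 1 / (k : K) * f k) n := by
    rw [sum_Icc_succ_top (Nat.le_add_left 1 n), Nat.choose_succ_self]
    simp [alternatingChooseSum]
  rw [← hextend, alternatingChooseSum, alternatingChooseSum, mul_sum, ← sum_add_distrib]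
  refine sum_congr rfl fun k hk => ?_
  obtain ⟨i, rfl⟩ := Nat.exists_eq_add_one.mpr (mem_Icc.mp hk).1
  have hpascal : ((n + 1).choose (i + 1) : K) = n.choose i + n.choose (i + 1) := by
    exact_mod_cast Nat.choose_succ_succ' n i
  push_cast
  linear_combination (-1 : K) ^ i * f (i + 1) * (cast_choose_div_succ (K := K) n i
    + ((i : K) + 1)⁻¹ * hpascal)

theorem alternatingChooseSum_div_eq_sum (f : ℕ → K) (n : ℕ) :
    alternatingChooseSum (fun k => 1 / (k : K) * f k) n
      = ∑ j ∈ Icc 1 n, 1 / (j : K) * alternatingChooseSum f j := by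
  induction n with
  | zero => simp [alternatingChooseSum]
  | succ n ih =>
    rw [alternatingChooseSum_div_succ, ih, sum_Icc_succ_top (Nat.le_add_left 1 n)]
    push_cast
    rfl

end Field

theorem alternatingChooseSum_nestedInv (n m : ℕ) :
    alternatingChooseSum (fun k => nestedInv k m) (n + 1) = 1 / (n + 1 : ℝ) ^ m := by
  induction m with
  | zero => simpa [nestedInv] using alternatingChooseSum_one n
  | succ m ih =>
    simp only [nestedInv]
    rw [alternatingChooseSum_sum_Icc, ih, pow_succ]
    field_simp

theorem karl_dual_general (n m : ℕ) (hm : 0 < m) :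
    ∑ k ∈ Finset.Icc 1 n, 1 / (k : ℝ) ^ m
    = ∑ k ∈ Finset.Icc 1 n,
        (-1 : ℝ) ^ (k + 1) * (n.choose k : ℝ) * ((1 / (k : ℝ)) * nestedInv k (m - 1)) := by
  obtain ⟨m, rfl⟩ := Nat.exists_eq_add_one.mpr hm
  rw [Nat.add_sub_cancel]
  change _ = alternatingChooseSum (fun k => 1 / (k : ℝ) * nestedInv k m) n
  rw [alternatingChooseSum_div_eq_sum]
  refine sum_congr rfl fun j hj => ?_
  obtain ⟨i, rfl⟩ := Nat.exists_eq_add_one.mpr (mem_Icc.mp hj).1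
  rw [alternatingChooseSum_nestedInv, pow_succ']
  push_cast
  field_simp

theorem karl_dual (n m : ℕ) (hn : 0 < n) (hm : 0 < m) :
    ∑ k ∈ Finset.Icc 1 n, 1 / (k : ℝ) ^ m
    = ∑ k ∈ Finset.Icc 1 n,
        (-1 : ℝ) ^ (k + 1) * (n.choose k : ℝ) * ((1 / (k : ℝ)) * nestedInv k (m - 1)) :=
  karl_dual_general n m hm
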